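/- arXiv:2201.06532 — 2 statements merged into one kernel-verified Lean document; each statement's English description precedes it below -/
import Mathlib

section
/- Let x_1, ..., x_{n+1} be positive real numbers. Then (1/2) * Σ_{j=1}^n √(x_j) - √(x_{n+1})/4 ≤ Σ_{j=1}^n x_j / √(x_j + x_{j+1}). -/
/-!
Since `√(x + y) ≤ √x + √y`, each term satisfies `x / √(x + y) ≥ x / (√x + √y) ≥ (3√x - √y) / 4`,
the last step being `(√x - √y)² ≥ 0`. Summing over `j`, the terms `(√x_j - √x_{j+1}) / 4`
telescope to `(√x_1 - √x_{n+1}) / 4 ≥ -√x_{n+1} / 4`.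
-/

open Finset Real

lemma three_mul_sub_div_four_le_sq_div_add {K : Type*} [Field K] [LinearOrder K]
    [IsStrictOrderedRing K] {a b : K} (hab : 0 < a + b) :
    (3 * a - b) / 4 ≤ a ^ 2 / (a + b) := by
  rw [div_le_div_iff₀ (by norm_num) hab]
  nlinarith [sq_nonneg (a - b)]

lemma sqrt_add_le_sqrt_add_sqrt {x y : ℝ} (hx : 0 ≤ x) (hy : 0 ≤ y) : √(x + y) ≤ √x + √y :=
  sqrt_le_iff.mpr ⟨by positivity, by
    nlinarith [sq_sqrt hx, sq_sqrt hy, mul_nonneg (sqrt_nonneg x) (sqrt_nonneg y)]⟩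

lemma three_mul_sqrt_sub_sqrt_div_four_le_div_sqrt_add {x y : ℝ} (hx : 0 < x) (hy : 0 ≤ y) :
    (3 * √x - √y) / 4 ≤ x / √(x + y) := by
  have hsum : 0 < √x + √y := by positivity
  calc (3 * √x - √y) / 4 ≤ √x ^ 2 / (√x + √y) := three_mul_sub_div_four_le_sq_div_add hsum
    _ = x / (√x + √y) := by rw [sq_sqrt hx.le]
    _ ≤ x / √(x + y) :=
      div_le_div_of_nonneg_left hx.le (by positivity) (sqrt_add_le_sqrt_add_sqrt hx.le hy)

lemma sum_Icc_sub_succ {M : Type*} [AddCommGroup M] (f : ℕ → M) (n : ℕ) :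
    ∑ j ∈ Icc 1 n, (f j - f (j + 1)) = f 1 - f (n + 1) := by
  rw [← Ico_add_one_right_eq_Icc, ← neg_sub, ← sum_Ico_sub f (by omega), ← sum_neg_distrib]
  simp only [neg_sub]

theorem stmt_0_general (n : ℕ) (x : ℕ → ℝ)
    (hx : ∀ j ∈ Finset.Icc 1 (n + 1), 0 < x j) :
    (1 / 2) * ∑ j ∈ Finset.Icc 1 n, Real.sqrt (x j) - Real.sqrt (x (n + 1)) / 4
      ≤ ∑ j ∈ Finset.Icc 1 n, x j / Real.sqrt (x j + x (j + 1)) := by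
  have hterm : ∀ j ∈ Icc 1 n, (3 * √(x j) - √(x (j + 1))) / 4 ≤ x j / √(x j + x (j + 1)) := by
    intro j hj
    rw [mem_Icc] at hj
    exact three_mul_sqrt_sub_sqrt_div_four_le_div_sqrt_add (hx j (mem_Icc.mpr ⟨hj.1, by omega⟩))
      (hx (j + 1) (mem_Icc.mpr ⟨by omega, by omega⟩)).le
  calc (1 / 2) * ∑ j ∈ Icc 1 n, √(x j) - √(x (n + 1)) / 4
      ≤ (1 / 2) * ∑ j ∈ Icc 1 n, √(x j) + (√(x 1) - √(x (n + 1))) / 4 := by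
        linarith [sqrt_nonneg (x 1)]
    _ = ∑ j ∈ Icc 1 n, (3 * √(x j) - √(x (j + 1))) / 4 := by
        rw [← sum_Icc_sub_succ (fun j ↦ √(x j)), mul_sum, sum_div, ← sum_add_distrib]
        exact sum_congr rfl fun j _ ↦ by ring
    _ ≤ ∑ j ∈ Icc 1 n, x j / √(x j + x (j + 1)) := sum_le_sum hterm

theorem stmt_0 (n : ℕ) (hn : 0 < n) (x : ℕ → ℝ)
    (hx : ∀ j ∈ Finset.Icc 1 (n + 1), 0 < x j) :
    (1 / 2) * ∑ j ∈ Finset.Icc 1 n, Real.sqrt (x j) - Real.sqrt (x (n + 1)) / 4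
      ≤ ∑ j ∈ Finset.Icc 1 n, x j / Real.sqrt (x j + x (j + 1)) :=
  stmt_0_general n x hx
end

section
/- Let x_1, ..., x_{n+1} be positive real numbers such that x_{n+1} ≤ Σ_{j=1}^n x_j. Then (1/4) * Σ_{j=1}^n √(x_j) ≤ Σ_{j=1}^n x_j / √(x_j + x_{j+1}). -/
/-! With `a j = √(x j)`, each term satisfies `x j / √(x j + x (j+1)) ≥ (3 a j - a (j+1)) / 4`,
because `√(x j + x (j+1)) ≤ a j + a (j+1)` and `4 u² - (3u - v)(u + v) = (u - v)²`.
Summing, the right-hand sides telescope to `(2 S + a 1 - a (n+1)) / 4` with `S = ∑ a j`, and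
`a (n+1) ≤ √(∑ x j) ≤ S` by the hypothesis on `x (n+1)`. -/

open Finset

namespace Real

theorem sqrt_sum_le_sum_sqrt {ι : Type*} (s : Finset ι) {f : ι → ℝ} (hf : ∀ i ∈ s, 0 ≤ f i) :
    √(∑ i ∈ s, f i) ≤ ∑ i ∈ s, √(f i) := by
  rw [sqrt_le_left (sum_nonneg fun i _ => sqrt_nonneg _)]
  calc ∑ i ∈ s, f i = ∑ i ∈ s, √(f i) ^ 2 := sum_congr rfl fun i hi => (sq_sqrt (hf i hi)).symm
    _ ≤ (∑ i ∈ s, √(f i)) ^ 2 := sum_sq_le_sq_sum_of_nonneg fun i _ => sqrt_nonneg _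

theorem three_mul_sqrt_sub_sqrt_div_four_le {x y : ℝ} (hx : 0 < x) (hy : 0 ≤ y) :
    (3 * √x - √y) / 4 ≤ x / √(x + y) := by
  have hu : 0 < √x := sqrt_pos.2 hx
  have hv : 0 ≤ √y := sqrt_nonneg y
  have hsqrt_add : √(x + y) ≤ √x + √y := by
    rw [sqrt_le_left (by positivity)]
    nlinarith [sq_sqrt hx.le, sq_sqrt hy]
  calc (3 * √x - √y) / 4 ≤ x / (√x + √y) := by
        rw [div_le_div_iff₀ (by norm_num) (by positivity)]
        nlinarith [sq_nonneg (√x - √y), sq_sqrt hx.le]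
    _ ≤ x / √(x + y) := div_le_div_of_nonneg_left hx.le (sqrt_pos.2 (by linarith)) hsqrt_add

end Real

theorem stmt_1 (n : ℕ) (hn : 0 < n) (x : ℕ → ℝ)
    (hx : ∀ j ∈ Finset.Icc 1 (n + 1), 0 < x j)
    (hlast : x (n + 1) ≤ ∑ j ∈ Finset.Icc 1 n, x j) :
    (1 / 4) * ∑ j ∈ Finset.Icc 1 n, Real.sqrt (x j)
      ≤ ∑ j ∈ Finset.Icc 1 n, x j / Real.sqrt (x j + x (j + 1)) := by
  have hx_succ : ∀ j ∈ Icc 1 n, 0 < x j ∧ 0 < x (j + 1) := fun j hj => by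
    rw [mem_Icc] at hj
    exact ⟨hx j (mem_Icc.2 ⟨hj.1, by omega⟩), hx (j + 1) (mem_Icc.2 ⟨by omega, by omega⟩)⟩
  have htermwise := sum_le_sum fun j hj =>
    Real.three_mul_sqrt_sub_sqrt_div_four_le (hx_succ j hj).1 (hx_succ j hj).2.le
  have htelescope := sum_Icc_sub hn (fun j => √(x j))
  have hlast_sqrt : √(x (n + 1)) ≤ ∑ j ∈ Icc 1 n, √(x j) :=
    (Real.sqrt_le_sqrt hlast).trans
      (Real.sqrt_sum_le_sum_sqrt _ fun j hj => (hx_succ j hj).1.le)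
  have hsplit : ∑ j ∈ Icc 1 n, (3 * √(x j) - √(x (j + 1))) / 4
      = (2 * ∑ j ∈ Icc 1 n, √(x j) - ∑ j ∈ Icc 1 n, (√(x (j + 1)) - √(x j))) / 4 := by
    rw [← sum_div, mul_sum, ← sum_sub_distrib]
    congr 1
    exact sum_congr rfl fun j _ => by ring
  rw [hsplit, htelescope] at htermwise
  linarith [Real.sqrt_nonneg (x 1)]
end
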